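/- arXiv:1602.03571 — 2 statements merged into one kernel-verified Lean document; each statement's English description precedes it below -/
import Mathlib

section
/- With the quantities φⱼ defined from expected perturb-max values as in the self-reducible upper bounds, the sequential rejection sampler (which at step j samples xⱼ with probability exp(φⱼ(x₁,…,xⱼ))/exp(φ_{j-1}(x₁,…,x_{j-1})) and rejects/restarts with the residual probability) accepts with probability Z(θ)/exp(E_γ[max_x {θ(x)+Σᵢ γᵢ(xᵢ)}]), and conditioned on acceptance its output x is distributed exactly according to the Gibbs distribution exp(θ(x))/Z(θ). -/
/-!
The acceptance ratios telescope: the sampler outputs `x` with probability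
`exp (φₙ x - φ₀ x)`. With every coordinate fixed there is nothing left to maximise, so
`φₙ x = θ x` because the Gumbel law is a probability measure, while `φ₀` is the full perturb-max
expectation `E`, independent of `x`. Hence each `x` is output with probability `exp (θ x) / exp E`;
summing gives the acceptance probability `Z(θ) / exp E`, and dividing gives the Gibbs law.
-/

open MeasureTheory Real

/-- Density of the zero-mean Gumbel distribution, whose CDF is `exp (-exp (-(t + c)))`. -/
noncomputable def gumbelPDF (t : ℝ) : ℝ :=
  Real.exp (-(t + Real.eulerMascheroniConstant)) *
    Real.exp (-Real.exp (-(t + Real.eulerMascheroniConstant)))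

/-- The zero-mean Gumbel measure on `ℝ`. -/
noncomputable def gumbel : Measure ℝ :=
  MeasureTheory.volume.withDensity fun t => ENNReal.ofReal (gumbelPDF t)

open Filter Topology Finset

theorem integrable_of_hasDerivAt_of_nonneg_of_tendsto {f F : ℝ → ℝ} {a b : ℝ}
    (hderiv : ∀ x, HasDerivAt F (f x) x) (hf : ∀ x, 0 ≤ f x)
    (hbot : Tendsto F atBot (𝓝 a)) (htop : Tendsto F atTop (𝓝 b)) : Integrable f := by
  have hint : ∀ u v : ℝ, IntegrableOn f (Set.Ioc u v) := fun u v =>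
    intervalIntegral.integrableOn_deriv_of_nonneg
      (fun x _ => (hderiv x).continuousAt.continuousWithinAt) (fun x _ => hderiv x)
      (fun x _ => hf x)
  refine integrable_of_intervalIntegral_norm_tendsto (b - a) (fun i => hint (-i) i)
    tendsto_neg_atTop_atBot tendsto_id ?_
  have hFTC : ∀ i : ℝ, ∫ x in -i..i, ‖f x‖ = F i - F (-i) := fun i => by
    simp_rw [Real.norm_of_nonneg (hf _)]
    exact intervalIntegral.integral_eq_sub_of_hasDerivAt (fun x _ => hderiv x)
      (intervalIntegrable_iff.mpr (hint _ _))
  simp_rw [hFTC]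
  exact htop.sub (hbot.comp tendsto_neg_atTop_atBot)

noncomputable def gumbelCDF (t : ℝ) : ℝ :=
  exp (-exp (-(t + eulerMascheroniConstant)))

theorem hasDerivAt_gumbelCDF (t : ℝ) : HasDerivAt gumbelCDF (gumbelPDF t) t := by
  unfold gumbelCDF
  have h := (((hasDerivAt_id t).add_const eulerMascheroniConstant).neg.exp.neg).exp
  simpa [gumbelPDF, mul_comm] using h

theorem gumbelPDF_nonneg (t : ℝ) : 0 ≤ gumbelPDF t :=
  (mul_pos (exp_pos _) (exp_pos _)).le

theorem tendsto_gumbelCDF_atBot : Tendsto gumbelCDF atBot (𝓝 0) :=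
  tendsto_exp_atBot.comp <| tendsto_neg_atTop_atBot.comp <| tendsto_exp_atTop.comp <|
    tendsto_neg_atBot_atTop.comp <| tendsto_atBot_add_const_right _ _ tendsto_id

theorem tendsto_gumbelCDF_atTop : Tendsto gumbelCDF atTop (𝓝 1) := by
  unfold gumbelCDF
  have h := (continuous_exp.tendsto 0).comp <| by
    simpa using (tendsto_exp_atBot.comp <| tendsto_neg_atTop_atBot.comp <|
      tendsto_atTop_add_const_right _ eulerMascheroniConstant tendsto_id).neg
  simpa [Function.comp_def] using h

theorem integrable_gumbelPDF : Integrable gumbelPDF :=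
  integrable_of_hasDerivAt_of_nonneg_of_tendsto hasDerivAt_gumbelCDF gumbelPDF_nonneg
    tendsto_gumbelCDF_atBot tendsto_gumbelCDF_atTop

theorem integral_gumbelPDF : ∫ t, gumbelPDF t = 1 := by
  simpa using integral_of_hasDerivAt_of_tendsto hasDerivAt_gumbelCDF integrable_gumbelPDF
    tendsto_gumbelCDF_atBot tendsto_gumbelCDF_atTop

instance : IsProbabilityMeasure gumbel := by
  constructor
  rw [gumbel, withDensity_apply _ MeasurableSet.univ, setLIntegral_univ,
    ← ofReal_integral_eq_lintegral_ofReal integrable_gumbelPDF (.of_forall gumbelPDF_nonneg),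
    integral_gumbelPDF, ENNReal.ofReal_one]

theorem Fin.prod_univ_exp_div_exp (f : ℕ → ℝ) (n : ℕ) :
    ∏ j : Fin n, exp (f (j + 1)) / exp (f j) = exp (f n) / exp (f 0) := by
  simp_rw [← exp_sub, ← exp_sum]
  rw [Fin.sum_univ_eq_sum_range (fun j => f (j + 1) - f j), sum_range_sub]

section PerturbMax

variable {n : ℕ} {X : Fin n → Type} [∀ i, Fintype (X i)] [∀ i, Nonempty (X i)]

/-- `max_{x_{j+1}^n} {θ(x) + Σ_{i>j} γᵢ(xᵢ)}`, the integrand of `φⱼ`. Since `Fin n` starts at `0`,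
the paper's fixed coordinates `x₁, …, xⱼ` are those with index `i < j`. -/
noncomputable def condPerturbMax (θ : (∀ i, X i) → ℝ) (j : ℕ) (x : ∀ i, X i)
    (γ : ∀ i, X i → ℝ) : ℝ :=
  univ.sup' univ_nonempty fun z : ∀ i, X i =>
    θ (fun i => if (i : ℕ) < j then x i else z i) +
      ∑ i ∈ univ.filter (fun i : Fin n => j ≤ (i : ℕ)), γ i (z i)

theorem condPerturbMax_zero (θ : (∀ i, X i) → ℝ) (x : ∀ i, X i) (γ : ∀ i, X i → ℝ) :
    condPerturbMax θ 0 x γ = univ.sup' univ_nonempty fun z => θ z + ∑ i, γ i (z i) := by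
  simp [condPerturbMax]

theorem condPerturbMax_of_le {j : ℕ} (hj : n ≤ j) (θ : (∀ i, X i) → ℝ) (x : ∀ i, X i)
    (γ : ∀ i, X i → ℝ) : condPerturbMax θ j x γ = θ x := by
  have hlt (i : Fin n) : (i : ℕ) < j := i.isLt.trans_le hj
  simp [condPerturbMax, hlt, Finset.filter_false_of_mem fun i _ => (hlt i).not_ge]

theorem prod_exp_div_exp_eq_of_eq_integral_condPerturbMax (μ : Measure (∀ i, X i → ℝ))
    [IsProbabilityMeasure μ] (θ : (∀ i, X i) → ℝ) (φ : ℕ → (∀ i, X i) → ℝ)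
    (hφ : ∀ j x, φ j x = ∫ γ, condPerturbMax θ j x γ ∂μ) (x : ∀ i, X i) :
    ∏ j : Fin n, exp (φ (j + 1) x) / exp (φ j x) =
      exp (θ x) / exp (∫ γ, univ.sup' univ_nonempty (fun z => θ z + ∑ i, γ i (z i)) ∂μ) := by
  rw [Fin.prod_univ_exp_div_exp (φ · x), hφ n, hφ 0]
  simp_rw [condPerturbMax_of_le le_rfl, condPerturbMax_zero, integral_const, probReal_univ,
    one_smul]

end PerturbMax

/-- The sequential rejection sampler built from the self-reducible perturb-max
upper bounds `φ j` outputs a given configuration `x` with probability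
`∏_j exp (φ (j+1) x) / exp (φ j x)`; it accepts with probability
`Z(θ) / exp (E_γ max {θ + Σ γ})`, and conditioned on acceptance the output is
distributed according to the Gibbs distribution `exp (θ x) / Z(θ)`. -/
theorem stmt_5 {n : ℕ} {X : Fin n → Type} [∀ i, Fintype (X i)] [∀ i, Nonempty (X i)]
    (θ : (∀ i, X i) → ℝ) (φ : ℕ → (∀ i, X i) → ℝ)
    (hφ : ∀ j : ℕ, ∀ x : ∀ i, X i,
      φ j x = ∫ γ : ∀ i, X i → ℝ,
          (Finset.univ.sup' Finset.univ_nonempty fun z : ∀ i, X i =>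
            θ (fun i => if (i : ℕ) < j then x i else z i) +
              ∑ i ∈ Finset.univ.filter (fun i : Fin n => j ≤ (i : ℕ)), γ i (z i))
        ∂(Measure.pi fun i => Measure.pi fun _ : X i => gumbel))
    (Paccept : ℝ)
    (hP : Paccept = ∑ x : ∀ i, X i,
      ∏ j : Fin n, Real.exp (φ ((j : ℕ) + 1) x) / Real.exp (φ (j : ℕ) x)) :
    (∀ x₀ : ∀ i, X i,
      Paccept = (∑ x : ∀ i, X i, Real.exp (θ x)) /
        Real.exp (∫ γ : ∀ i, X i → ℝ,
          (Finset.univ.sup' Finset.univ_nonempty fun z : ∀ i, X i =>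
            θ z + ∑ i : Fin n, γ i (z i))
          ∂(Measure.pi fun i => Measure.pi fun _ : X i => gumbel))) ∧
    (∀ x : ∀ i, X i,
      (∏ j : Fin n, Real.exp (φ ((j : ℕ) + 1) x) / Real.exp (φ (j : ℕ) x)) / Paccept
        = Real.exp (θ x) / ∑ y : ∀ i, X i, Real.exp (θ y)) := by
  have hout := prod_exp_div_exp_eq_of_eq_integral_condPerturbMax _ θ φ hφ
  have hacc : Paccept = (∑ x, exp (θ x)) / exp (∫ γ, univ.sup' univ_nonempty
      (fun z => θ z + ∑ i, γ i (z i)) ∂(Measure.pi fun i => Measure.pi fun _ : X i => gumbel)) := by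
    rw [hP, sum_div]
    exact sum_congr rfl fun x _ => hout x
  refine ⟨fun _ => hacc, fun x => ?_⟩
  rw [hout, hacc, div_div_div_cancel_right₀ (exp_ne_zero _)]
end

section
/- Define U(p) = E_γ[ Σ_{α∈A} γ_α(x^γ_α) ] where x^γ = argmax_x { θ(x) + Σ_{α∈A} γ_α(x_α) }. Then U ≥ 0, U equals 0 when the perturb-max model is deterministic (θ taking value -∞ outside a single configuration), and U is maximized over all potentials θ by constant potentials, i.e., U(p_uniform) ≥ U(p) for the perturb-max model p induced by any θ. -/
/-!
Every coordinate `γ_α(x_α)` of the product measure is zero-mean Gumbel: substituting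
`u = exp (-(t + γ))` turns its mean into `-∫₀^∞ log u e^{-u} du - γ = -Γ'(1) - γ = 0`.
Hence for each fixed configuration `x` the perturbation `Σ_α γ_α(x_α)` has expectation `0`.
A maximizer of `θ + perturbation` carries at least the perturbation of a maximizer `x₀` of `θ`,
so `U ≥ 0`; a constant argmax gives `U = 0`; and the maximizer of the bare perturbation
dominates the perturbation of every maximizer, so `U(θ) ≤ U(const)`. The latter is a genuine
integral (a finite maximum of integrable functions), while a non-integrable `U(θ)` is `0` by
convention and is handled by `U(const) ≥ 0`.
-/

open MeasureTheory Real

open Set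

/-- If `u` has the `Exp(1)` law, then `expToGumbel u` has the law `gumbel`. -/
noncomputable def expToGumbel (u : ℝ) : ℝ := -log u - eulerMascheroniConstant

lemma hasDerivWithinAt_expToGumbel {u : ℝ} (hu : u ∈ Ioi 0) :
    HasDerivWithinAt expToGumbel (-u⁻¹) (Ioi 0) u :=
  ((hasDerivAt_log (ne_of_gt hu)).neg.sub_const _).hasDerivWithinAt

lemma injOn_expToGumbel : InjOn expToGumbel (Ioi 0) := fun a ha b hb h =>
  log_injOn_pos ha hb (by unfold expToGumbel at h; linarith)

lemma image_expToGumbel : expToGumbel '' Ioi 0 = univ :=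
  eq_univ_of_forall fun t => ⟨exp (-(t + eulerMascheroniConstant)), exp_pos _, by
    rw [expToGumbel, log_exp]; ring⟩

lemma abs_deriv_smul_gumbelPDF_expToGumbel {u : ℝ} (hu : u ∈ Ioi 0) (y : ℝ) :
    |-u⁻¹| • ((gumbelPDF (expToGumbel u)).toNNReal • y) = exp (-u) * y := by
  rw [mem_Ioi] at hu
  have hpdf : gumbelPDF (expToGumbel u) = u * exp (-u) := by
    rw [gumbelPDF, expToGumbel, show -(-log u - eulerMascheroniConstant + eulerMascheroniConstant)
      = log u by ring, exp_log hu]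
  rw [NNReal.smul_def, hpdf, Real.coe_toNNReal _ (by positivity), abs_neg, abs_inv,
    abs_of_pos hu, smul_eq_mul, smul_eq_mul]
  field_simp

lemma gumbel_eq_withDensity_toNNReal :
    gumbel = volume.withDensity fun t => ((gumbelPDF t).toNNReal : ENNReal) := rfl

lemma measurable_gumbelPDF_toNNReal : Measurable fun t => (gumbelPDF t).toNNReal := by
  unfold gumbelPDF; fun_prop

lemma integral_gumbel (g : ℝ → ℝ) :
    ∫ t, g t ∂gumbel = ∫ u in Ioi 0, exp (-u) * g (expToGumbel u) := by
  rw [gumbel_eq_withDensity_toNNReal, integral_withDensity_eq_integral_smul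
    measurable_gumbelPDF_toNNReal, ← setIntegral_univ, ← image_expToGumbel,
    integral_image_eq_integral_abs_deriv_smul measurableSet_Ioi
      (fun _ => hasDerivWithinAt_expToGumbel) injOn_expToGumbel]
  exact setIntegral_congr_fun measurableSet_Ioi fun u hu =>
    abs_deriv_smul_gumbelPDF_expToGumbel hu _

lemma integrable_gumbel_iff (g : ℝ → ℝ) :
    Integrable g gumbel ↔ IntegrableOn (fun u => exp (-u) * g (expToGumbel u)) (Ioi 0) := by
  rw [gumbel_eq_withDensity_toNNReal, integrable_withDensity_iff_integrable_smul
    measurable_gumbelPDF_toNNReal, ← integrableOn_univ, ← image_expToGumbel,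
    integrableOn_image_iff_integrableOn_abs_deriv_smul measurableSet_Ioi
      (fun _ => hasDerivWithinAt_expToGumbel) injOn_expToGumbel]
  exact integrableOn_congr_fun (fun u hu =>
    abs_deriv_smul_gumbelPDF_expToGumbel hu _) measurableSet_Ioi

instance isProbabilityMeasure_gumbel : IsProbabilityMeasure gumbel := by
  have h := integral_gumbel fun _ => 1
  simp only [mul_one, integral_exp_neg_Ioi_zero, integral_const, smul_eq_mul] at h
  exact ⟨ENNReal.toReal_eq_one_iff _ |>.1 h⟩

-- `Γ'(1) = -γ`, and `Γ'(1)` is the Mellin transform of `log t * exp (-t)` at `1`.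
lemma integral_log_mul_exp_neg :
    ∫ t in Ioi 0, log t * exp (-t) = -eulerMascheroniConstant := by
  have hIntegral := Complex.hasDerivAt_GammaIntegral (s := 1) one_pos
  have hGamma : HasDerivAt Complex.GammaIntegral (-eulerMascheroniConstant : ℂ) 1 := by
    refine Complex.hasDerivAt_Gamma_one.congr_of_eventuallyEq ?_
    filter_upwards [(isOpen_lt continuous_const Complex.continuous_re).mem_nhds
      (show (0 : ℝ) < (1 : ℂ).re by simp)] with z hz
    exact (Complex.Gamma_eq_integral hz).symm
  have := hIntegral.unique hGamma
  simp only [sub_self, Complex.cpow_zero, one_mul, ← Complex.ofReal_mul] at this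
  exact_mod_cast this

lemma integrableOn_log_mul_exp_neg :
    IntegrableOn (fun t => log t * exp (-t)) (Ioi 0) :=
  -- a non-integrable function has integral `0`, but this one has integral `-γ`
  Integrable.of_integral_ne_zero <| by
    rw [integral_log_mul_exp_neg, neg_ne_zero]
    exact (one_half_pos.trans one_half_lt_eulerMascheroniConstant).ne'

lemma expToGumbel_mul_exp_neg (u : ℝ) :
    exp (-u) * expToGumbel u = -(log u * exp (-u)) - eulerMascheroniConstant * exp (-u) := by
  rw [expToGumbel]; ring

lemma integrable_id_gumbel : Integrable id gumbel := by
  rw [integrable_gumbel_iff]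
  simp only [id, expToGumbel_mul_exp_neg]
  exact integrableOn_log_mul_exp_neg.neg.sub ((integrableOn_exp_neg_Ioi 0).const_mul _)

lemma integral_id_gumbel : ∫ t, t ∂gumbel = 0 := by
  rw [integral_gumbel]
  simp only [expToGumbel_mul_exp_neg]
  rw [integral_sub (f := fun u => -(log u * exp (-u))) integrableOn_log_mul_exp_neg.neg
    ((integrableOn_exp_neg_Ioi 0).const_mul _), integral_neg, integral_log_mul_exp_neg,
    integral_const_mul, integral_exp_neg_Ioi_zero]
  ring

section IidCoordinates

variable {ι : Type*} [Fintype ι] {κ : ι → Type*} [∀ i, Fintype (κ i)]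

lemma measurePreserving_eval_eval {β : Type*} [MeasurableSpace β] (ν : Measure β)
    [IsProbabilityMeasure ν] (i : ι) (k : κ i) :
    MeasurePreserving (fun γ : ∀ i, κ i → β => γ i k)
      (Measure.pi fun i => Measure.pi fun _ : κ i => ν) ν :=
  (measurePreserving_eval (fun _ : κ i => ν) k).comp
    (measurePreserving_eval (fun i => Measure.pi fun _ : κ i => ν) i)

variable {ν : Measure ℝ} [IsProbabilityMeasure ν]

lemma integrable_eval_eval (hν : Integrable id ν) (i : ι) (k : κ i) :
    Integrable (fun γ : ∀ i, κ i → ℝ => γ i k)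
      (Measure.pi fun i => Measure.pi fun _ : κ i => ν) :=
  (measurePreserving_eval_eval ν i k).integrable_comp_of_integrable hν

lemma integral_eval_eval (i : ι) (k : κ i) :
    ∫ γ : ∀ i, κ i → ℝ, γ i k ∂(Measure.pi fun i => Measure.pi fun _ : κ i => ν) =
      ∫ t, t ∂ν := by
  have hmp := measurePreserving_eval_eval ν i k
  calc _ = ∫ t, t ∂(Measure.map (fun γ : ∀ i, κ i → ℝ => γ i k) _) :=
        (integral_map hmp.measurable.aemeasurable aestronglyMeasurable_id).symm
    _ = ∫ t, t ∂ν := by rw [hmp.map_eq]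

lemma integrable_sum_eval_eval (hν : Integrable id ν) (s : ∀ i, κ i) :
    Integrable (fun γ : ∀ i, κ i → ℝ => ∑ i, γ i (s i))
      (Measure.pi fun i => Measure.pi fun _ : κ i => ν) :=
  integrable_finsetSum _ fun i _ => integrable_eval_eval hν i (s i)

lemma integral_sum_eval_eval (hν : Integrable id ν) (hν₀ : ∫ t, t ∂ν = 0) (s : ∀ i, κ i) :
    ∫ γ, ∑ i, γ i (s i) ∂(Measure.pi fun i => Measure.pi fun _ : κ i => ν) = 0 := by
  rw [integral_finsetSum _ fun i _ => integrable_eval_eval hν i (s i)]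
  simp only [integral_eval_eval, hν₀, Finset.sum_const_zero]

end IidCoordinates

section Argmax

variable {Ω : Type*} [MeasurableSpace Ω] {μ : Measure Ω}

lemma integrable_finset_sup' {τ : Type*} {s : Finset τ} (hs : s.Nonempty) {f : τ → Ω → ℝ}
    (hf : ∀ x ∈ s, Integrable (f x) μ) : Integrable (s.sup' hs f) μ :=
  Finset.sup'_induction (p := fun g => Integrable g μ) hs f (fun _ hf _ hg => hf.sup hg) hf

lemma integrable_apply_of_isMax {τ : Type*} [Fintype τ] [Nonempty τ] {f : τ → Ω → ℝ}
    (hf : ∀ x, Integrable (f x) μ) {s : Ω → τ} (hs : ∀ ω x, f x ω ≤ f (s ω) ω) :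
    Integrable (fun ω => f (s ω) ω) μ := by
  have hsup : (fun ω => f (s ω) ω) = Finset.univ.sup' Finset.univ_nonempty f := by
    funext ω
    rw [Finset.sup'_apply]
    exact le_antisymm (Finset.le_sup' (f · ω) (Finset.mem_univ _))
      (Finset.sup'_le _ _ fun x _ => hs ω x)
  rw [hsup]
  exact integrable_finset_sup' _ fun x _ => hf x

lemma integral_nonneg_of_integrable_le {f g : Ω → ℝ} (hf : Integrable f μ)
    (hf₀ : 0 ≤ ∫ ω, f ω ∂μ) (hfg : ∀ ω, f ω ≤ g ω) : 0 ≤ ∫ ω, g ω ∂μ := by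
  by_cases hg : Integrable g μ
  · exact hf₀.trans (integral_mono hf hg hfg)
  · rw [integral_undef hg]

lemma integral_mono_of_integral_nonneg {f g : Ω → ℝ} (hg : Integrable g μ)
    (hg₀ : 0 ≤ ∫ ω, g ω ∂μ) (hfg : ∀ ω, f ω ≤ g ω) : ∫ ω, f ω ∂μ ≤ ∫ ω, g ω ∂μ := by
  by_cases hf : Integrable f μ
  · exact integral_mono hf hg hfg
  · rwa [integral_undef hf]

end Argmax

theorem stmt_10_general {n : ℕ} {X : Fin n → Type} [∀ i, Fintype (X i)] [∀ i, Nonempty (X i)]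
    (A : Finset (Finset (Fin n)))
    (μ : Measure (∀ α : A, ((i : (α : Finset (Fin n))) → X i) → ℝ))
    (hμ : μ = Measure.pi fun α : A =>
      Measure.pi fun _ : (i : (α : Finset (Fin n))) → X i => gumbel)
    (U : ((∀ i, X i) → ℝ) →
      (((∀ α : A, ((i : (α : Finset (Fin n))) → X i) → ℝ) → ∀ i, X i)) → ℝ)
    (hU : ∀ θ xstar, U θ xstar = ∫ γ, (∑ α : A, γ α (fun i => xstar γ i)) ∂μ) :
    (∀ (θ : (∀ i, X i) → ℝ) xstar,
      (∀ γ, ∀ x : ∀ i, X i,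
        θ x + ∑ α : A, γ α (fun i => x i)
          ≤ θ (xstar γ) + ∑ α : A, γ α (fun i => xstar γ i)) →
      0 ≤ U θ xstar) ∧
    (∀ (θ : (∀ i, X i) → ℝ) xstar (xhat : ∀ i, X i),
      (∀ γ, xstar γ = xhat) → U θ xstar = 0) ∧
    (∀ (c : ℝ) (xstarU : (∀ α : A, ((i : (α : Finset (Fin n))) → X i) → ℝ) → ∀ i, X i),
      (∀ γ : ∀ α : A, ((i : (α : Finset (Fin n))) → X i) → ℝ, ∀ x : ∀ i, X i,
        (∑ α : A, γ α (fun i => x i)) ≤ ∑ α : A, γ α (fun i => xstarU γ i)) →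
      ∀ (θ : (∀ i, X i) → ℝ) xstar,
        (∀ γ, ∀ x : ∀ i, X i,
          θ x + ∑ α : A, γ α (fun i => x i)
            ≤ θ (xstar γ) + ∑ α : A, γ α (fun i => xstar γ i)) →
        U θ xstar ≤ U (fun _ => c) xstarU) := by
  subst hμ
  have hint (x : ∀ i, X i) := integrable_sum_eval_eval integrable_id_gumbel
    fun (α : A) (i : (α : Finset (Fin n))) => x i
  have hzero (x : ∀ i, X i) := integral_sum_eval_eval integrable_id_gumbel integral_id_gumbel
    fun (α : A) (i : (α : Finset (Fin n))) => x i
  have hnonneg : ∀ (θ : (∀ i, X i) → ℝ) xstar, (∀ γ x, θ x + ∑ α : A, γ α (fun i => x i)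
      ≤ θ (xstar γ) + ∑ α : A, γ α (fun i => xstar γ i)) → 0 ≤ U θ xstar := by
    intro θ xstar hmax
    obtain ⟨x₀, hx₀⟩ := Finite.exists_max θ
    rw [hU]
    exact integral_nonneg_of_integrable_le (hint x₀) (hzero x₀).ge fun γ => by
      linarith [hmax γ x₀, hx₀ (xstar γ)]
  refine ⟨hnonneg, fun θ xstar xhat hconst => ?_, fun c xstarU hmaxU θ xstar hmax => ?_⟩
  · rw [hU]
    simp_rw [hconst]
    exact hzero xhat
  · have hUnonneg := hnonneg (fun _ => c) xstarU fun γ x => by simpa using hmaxU γ x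
    simp only [hU] at hUnonneg ⊢
    exact integral_mono_of_integral_nonneg (integrable_apply_of_isMax hint hmaxU) hUnonneg
      fun γ => hmaxU γ (xstar γ)

/-- Properties of the perturb-max uncertainty measure
`U(θ) = E_γ [Σ_{α∈A} γ_α(x^γ_α)]`: it is nonnegative, it vanishes when the
perturb-max model is deterministic (constant argmax), and it is maximized by
constant potentials (which induce the uniform perturb-max model). -/
theorem stmt_10 {n : ℕ} {X : Fin n → Type} [∀ i, Fintype (X i)] [∀ i, Nonempty (X i)]
    (A : Finset (Finset (Fin n)))
    (hcover : ∀ i : Fin n, ∃ α ∈ A, i ∈ α)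
    (μ : Measure (∀ α : A, ((i : (α : Finset (Fin n))) → X i) → ℝ))
    (hμ : μ = Measure.pi fun α : A =>
      Measure.pi fun _ : (i : (α : Finset (Fin n))) → X i => gumbel)
    (U : ((∀ i, X i) → ℝ) →
      (((∀ α : A, ((i : (α : Finset (Fin n))) → X i) → ℝ) → ∀ i, X i)) → ℝ)
    (hU : ∀ θ xstar, U θ xstar = ∫ γ, (∑ α : A, γ α (fun i => xstar γ i)) ∂μ) :
    (∀ (θ : (∀ i, X i) → ℝ) xstar,
      (∀ γ, ∀ x : ∀ i, X i,
        θ x + ∑ α : A, γ α (fun i => x i)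
          ≤ θ (xstar γ) + ∑ α : A, γ α (fun i => xstar γ i)) →
      0 ≤ U θ xstar) ∧
    (∀ (θ : (∀ i, X i) → ℝ) xstar (xhat : ∀ i, X i),
      (∀ γ, xstar γ = xhat) → U θ xstar = 0) ∧
    (∀ (c : ℝ) (xstarU : (∀ α : A, ((i : (α : Finset (Fin n))) → X i) → ℝ) → ∀ i, X i),
      (∀ γ : ∀ α : A, ((i : (α : Finset (Fin n))) → X i) → ℝ, ∀ x : ∀ i, X i,
        (∑ α : A, γ α (fun i => x i)) ≤ ∑ α : A, γ α (fun i => xstarU γ i)) →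
      ∀ (θ : (∀ i, X i) → ℝ) xstar,
        (∀ γ, ∀ x : ∀ i, X i,
          θ x + ∑ α : A, γ α (fun i => x i)
            ≤ θ (xstar γ) + ∑ α : A, γ α (fun i => xstar γ i)) →
        U θ xstar ≤ U (fun _ => c) xstarU) :=
  stmt_10_general A μ hμ U hU
end
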